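/- arXiv:1308.0708 — 4 statements merged into one kernel-verified Lean document; each statement's English description precedes it below -/
import Mathlib

section
/- Let H be a Hilbert space, A bounded self-adjoint, B bounded skew-adjoint on H, and let M = [[A, B], [-B, -A]] on H ⊕ H. If there exists λ > 0 such that A ≥ λ (or -A ≥ λ), then σ(M) ∩ (-λ, λ) = ∅. -/
/-!
With `J = diag(1, -1)` on `H ⊕ H`, the `B`-terms of `Re ⟪J w, M w⟫` cancel because `B` is
skew-adjoint, leaving `Re ⟪u, A u⟫ + Re ⟪v, A v⟫ ≥ λ ‖w‖²` for `w = (u, v)`. Since `J` is an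
isometry, Cauchy–Schwarz turns this into `‖(M - r) w‖ ≥ (λ - |r|) ‖w‖` for real `r`, and a
self-adjoint operator that is bounded below is invertible. The case `-A ≥ λ` is the same with `-J`.
-/

open ContinuousLinearMap RCLike
open scoped InnerProductSpace

section InnerProductSpace

variable {𝕜 E : Type*} [RCLike 𝕜] [NormedAddCommGroup E] [InnerProductSpace 𝕜 E]

/-- `⟪T² x, x⟫ = ‖T x‖²` makes `T²` coercive, hence invertible. -/
theorem IsSelfAdjoint.isUnit_of_forall_mul_norm_le [CompleteSpace E] {T : E →L[𝕜] E}
    (hT : IsSelfAdjoint T) {c : ℝ} (hc : 0 < c) (h : ∀ x, c * ‖x‖ ≤ ‖T x‖) : IsUnit T := by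
  rw [← isUnit_pow_iff two_ne_zero]
  refine isUnit_of_forall_le_norm_inner_map (T ^ 2) (c := (c ^ 2).toNNReal)
    (Real.toNNReal_pos.mpr (by positivity)) fun x ↦ ?_
  have hsq : ⟪(T ^ 2) x, x⟫_𝕜 = (‖T x‖ ^ 2 : 𝕜) := by
    rw [pow_two, mul_apply_eq_comp, ← adjoint_inner_right, hT.adjoint_eq,
      inner_self_eq_norm_sq_to_K]
  rw [hsq, norm_pow, norm_ofReal, abs_norm, Real.coe_toNNReal _ (sq_nonneg c)]
  calc ‖x‖ ^ 2 * c ^ 2 = (c * ‖x‖) ^ 2 := by ring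
    _ ≤ ‖T x‖ ^ 2 := by gcongr; exact h x

theorem mul_norm_le_norm_sub_smul_of_le_re_inner (J T : E → E) (hJ : ∀ w, ‖J w‖ ≤ ‖w‖)
    {c : ℝ} (h : ∀ w, c * ‖w‖ ^ 2 ≤ re ⟪J w, T w⟫_𝕜) (r : ℝ) (w : E) :
    (c - |r|) * ‖w‖ ≤ ‖T w - (r : 𝕜) • w‖ := by
  have hre : |re ⟪J w, (r : 𝕜) • w⟫_𝕜| ≤ |r| * ‖w‖ ^ 2 := by
    rw [inner_smul_right, re_ofReal_mul, abs_mul, sq]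
    gcongr
    exact (abs_re_le_norm _).trans <| (norm_inner_le_norm _ _).trans <| by gcongr; exact hJ w
  have key : (c - |r|) * ‖w‖ ^ 2 ≤ ‖w‖ * ‖T w - (r : 𝕜) • w‖ :=
    calc (c - |r|) * ‖w‖ ^ 2 ≤ re ⟪J w, T w - (r : 𝕜) • w⟫_𝕜 := by
          rw [inner_sub_right, map_sub]; linarith [h w, le_abs_self (re ⟪J w, (r : 𝕜) • w⟫_𝕜)]
      _ ≤ ‖J w‖ * ‖T w - (r : 𝕜) • w‖ := re_inner_le_norm _ _
      _ ≤ ‖w‖ * ‖T w - (r : 𝕜) • w‖ := by gcongr; exact hJ w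
  rcases (norm_nonneg w).eq_or_lt with hw | hw
  · rw [← hw, mul_zero]; exact norm_nonneg _
  · rw [sq, ← mul_assoc, mul_comm ‖w‖] at key
    exact le_of_mul_le_mul_right key hw

theorem IsSelfAdjoint.ofReal_notMem_spectrum_of_le_re_inner [CompleteSpace E] {T : E →L[𝕜] E}
    (hT : IsSelfAdjoint T) (J : E → E) (hJ : ∀ w, ‖J w‖ ≤ ‖w‖) {c : ℝ}
    (h : ∀ w, c * ‖w‖ ^ 2 ≤ re ⟪J w, T w⟫_𝕜) {r : ℝ} (hr : |r| < c) :
    (r : 𝕜) ∉ spectrum 𝕜 T := by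
  refine spectrum.notMem_iff.mpr <| ((IsSelfAdjoint.algebraMap _ (conj_ofReal r)).sub hT)
    |>.isUnit_of_forall_mul_norm_le (sub_pos.mpr hr) fun w ↦ ?_
  rw [sub_apply, ContinuousLinearMap.algebraMap_apply, norm_sub_rev]
  exact mul_norm_le_norm_sub_smul_of_le_re_inner J T hJ h r w

theorem inner_apply_eq_neg_of_adjoint_eq_neg [CompleteSpace E] {B : E →L[𝕜] E}
    (hB : adjoint B = -B) (u v : E) : ⟪B u, v⟫_𝕜 = -⟪u, B v⟫_𝕜 := by
  rw [← adjoint_inner_right, hB, neg_apply, inner_neg_right]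

theorem re_inner_apply_eq_neg_of_adjoint_eq_neg [CompleteSpace E] {B : E →L[𝕜] E}
    (hB : adjoint B = -B) (u v : E) : re ⟪v, B u⟫_𝕜 = -re ⟪u, B v⟫_𝕜 := by
  rw [inner_re_symm, inner_apply_eq_neg_of_adjoint_eq_neg hB, map_neg]

end InnerProductSpace

section Block

variable {H : Type*} [NormedAddCommGroup H]

def negSnd (w : WithLp 2 (H × H)) : WithLp 2 (H × H) := WithLp.toLp 2 (w.fst, -w.snd)

theorem norm_negSnd (w : WithLp 2 (H × H)) : ‖negSnd w‖ = ‖w‖ := by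
  rw [WithLp.prod_norm_eq_of_L2, WithLp.prod_norm_eq_of_L2]
  simp [negSnd]

variable {𝕜 : Type*} [RCLike 𝕜] [InnerProductSpace 𝕜 H]

def IsBlockOperator (A B : H →L[𝕜] H) (M : WithLp 2 (H × H) →L[𝕜] WithLp 2 (H × H)) : Prop :=
  ∀ u v : H, M ((WithLp.prodContinuousLinearEquiv 2 𝕜 H H).symm (u, v)) =
    (WithLp.prodContinuousLinearEquiv 2 𝕜 H H).symm (A u + B v, -(B u) - A v)

namespace IsBlockOperator

variable {A B : H →L[𝕜] H} {M : WithLp 2 (H × H) →L[𝕜] WithLp 2 (H × H)}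

theorem fst_apply (hM : IsBlockOperator A B M) (w : WithLp 2 (H × H)) :
    (M w).fst = A w.fst + B w.snd := by
  rw [show M w = _ from hM w.fst w.snd]; rfl

theorem snd_apply (hM : IsBlockOperator A B M) (w : WithLp 2 (H × H)) :
    (M w).snd = -(B w.fst) - A w.snd := by
  rw [show M w = _ from hM w.fst w.snd]; rfl

variable [CompleteSpace H]

theorem isSelfAdjoint (hM : IsBlockOperator A B M) (hA : IsSelfAdjoint A)
    (hB : adjoint B = -B) : IsSelfAdjoint M := by
  rw [isSelfAdjoint_iff_isSymmetric]
  intro w z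
  have hA' (x y : H) : ⟪A x, y⟫_𝕜 = ⟪x, A y⟫_𝕜 := hA.isSymmetric x y
  simp only [coe_coe, WithLp.prod_inner_apply, WithLp.ofLp_fst, WithLp.ofLp_snd, hM.fst_apply,
    hM.snd_apply, inner_add_left, inner_add_right, inner_sub_left, inner_sub_right,
    inner_neg_left, inner_neg_right, hA', inner_apply_eq_neg_of_adjoint_eq_neg hB]
  ring

theorem re_inner_negSnd_apply (hM : IsBlockOperator A B M) (hB : adjoint B = -B)
    (w : WithLp 2 (H × H)) :
    re ⟪negSnd w, M w⟫_𝕜 = re ⟪w.fst, A w.fst⟫_𝕜 + re ⟪w.snd, A w.snd⟫_𝕜 := by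
  simp only [negSnd, WithLp.prod_inner_apply, WithLp.ofLp_fst, WithLp.ofLp_snd,
    hM.fst_apply, hM.snd_apply, inner_add_right, inner_sub_right, inner_neg_left,
    inner_neg_right, map_add, map_sub, map_neg,
    re_inner_apply_eq_neg_of_adjoint_eq_neg hB w.fst w.snd]
  ring

end IsBlockOperator

end Block

theorem block_operator_spectral_gap_general
    {H : Type*} [NormedAddCommGroup H] [InnerProductSpace ℂ H] [CompleteSpace H]
    (A B : H →L[ℂ] H) (hA : IsSelfAdjoint A) (hB : ContinuousLinearMap.adjoint B = -B)
    (M : WithLp 2 (H × H) →L[ℂ] WithLp 2 (H × H))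
    (hM : ∀ u v : H,
      M ((WithLp.prodContinuousLinearEquiv 2 ℂ H H).symm (u, v)) =
        (WithLp.prodContinuousLinearEquiv 2 ℂ H H).symm (A u + B v, -(B u) - A v))
    (lam : ℝ)
    (hbound : (∀ u : H, lam * ‖u‖ ^ 2 ≤ (inner ℂ u (A u) : ℂ).re) ∨
      (∀ u : H, lam * ‖u‖ ^ 2 ≤ (inner ℂ u ((-A) u) : ℂ).re)) :
    spectrum ℂ M ∩ ((fun t : ℝ => (t : ℂ)) '' Set.Ioo (-lam) lam) = ∅ := by
  have hM : IsBlockOperator A B M := hM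
  have hMsa := hM.isSelfAdjoint hA hB
  rw [Set.eq_empty_iff_forall_notMem]
  rintro _ ⟨hspec, r, hr, rfl⟩
  have hr : |r| < lam := abs_lt.mpr hr
  have hnorm_sq (w : WithLp 2 (H × H)) : ‖w‖ ^ 2 = ‖w.fst‖ ^ 2 + ‖w.snd‖ ^ 2 :=
    WithLp.prod_norm_sq_eq_of_L2 w
  simp_rw [← RCLike.re_to_complex] at hbound
  rcases hbound with hpos | hneg
  · refine hMsa.ofReal_notMem_spectrum_of_le_re_inner negSnd (fun w ↦ (norm_negSnd w).le)
      (fun w ↦ ?_) hr hspec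
    rw [hM.re_inner_negSnd_apply hB, hnorm_sq]
    linarith [hpos w.fst, hpos w.snd]
  · refine hMsa.ofReal_notMem_spectrum_of_le_re_inner (-negSnd ·)
      (fun w ↦ (norm_neg (negSnd w)).trans_le (norm_negSnd w).le) (fun w ↦ ?_) hr hspec
    simp only [neg_apply, inner_neg_right, map_neg] at hneg
    rw [inner_neg_left, map_neg, hM.re_inner_negSnd_apply hB, hnorm_sq]
    linarith [hneg w.fst, hneg w.snd]

/-- For `A` bounded self-adjoint and `B` bounded skew-adjoint on a Hilbert
space `H`, and `M = [[A, B], [-B, -A]]` on `H ⊕ H`: if there is `lam > 0` with `A ≥ lam`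
or `-A ≥ lam` (in the quadratic-form sense), then `σ(M) ∩ (-lam, lam) = ∅`. -/
theorem block_operator_spectral_gap
    {H : Type*} [NormedAddCommGroup H] [InnerProductSpace ℂ H] [CompleteSpace H]
    (A B : H →L[ℂ] H) (hA : IsSelfAdjoint A) (hB : ContinuousLinearMap.adjoint B = -B)
    (M : WithLp 2 (H × H) →L[ℂ] WithLp 2 (H × H))
    (hM : ∀ u v : H,
      M ((WithLp.prodContinuousLinearEquiv 2 ℂ H H).symm (u, v)) =
        (WithLp.prodContinuousLinearEquiv 2 ℂ H H).symm (A u + B v, -(B u) - A v))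
    (lam : ℝ) (hlam : 0 < lam)
    (hbound : (∀ u : H, lam * ‖u‖ ^ 2 ≤ (inner ℂ u (A u) : ℂ).re) ∨
      (∀ u : H, lam * ‖u‖ ^ 2 ≤ (inner ℂ u ((-A) u) : ℂ).re)) :
    spectrum ℂ M ∩ ((fun t : ℝ => (t : ℂ)) '' Set.Ioo (-lam) lam) = ∅ :=
  block_operator_spectral_gap_general A B hA hB M hM lam hbound
end

section
/- Let M_n be the nℓ×nℓ block tridiagonal matrix with diagonal blocks V_1,…,V_n (real symmetric ℓ×ℓ) and off-diagonal blocks -S_1,…,-S_{n-1} above the diagonal and -S_1ᵗ,…,-S_{n-1}ᵗ below (S_j real invertible ℓ×ℓ). Let P^E be the unique ℂ^{ℓ×ℓ}-valued solution of -S_{k-1}ᵗ X(k-1) + V_k X(k) - S_k X(k+1) = E X(k), k = 1,…,n (with S_0 = S_n = I), satisfying P^E(0) = 0 and P^E(1) = I. Then det(M_n - E) = (∏_{j=1}^{n-1} det S_j) · det P^E(n+1). -/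
/-!
The vector `p = (P(1), …, P(n))` satisfies `(M_n - E) p = (0, …, 0, S_n P(n+1))` because
`P(0) = 0`. Let `W` be the identity with its first block column replaced by `p`: it is block lower
triangular, so `det W = det P(1) = 1`. Rotating the first block column of `(M_n - E) W` to the last
place gives a block lower triangular matrix with diagonal blocks `-S_1, …, -S_{n-1}, S_n P(n+1)`;
the sign `(-1)^((n-1)ℓ)` of this rotation cancels against those of the `det (-S_j)`.
-/

open Matrix

/-- Entrywise complexification of a real matrix. -/
def cMat {l : ℕ} (M : Matrix (Fin l) (Fin l) ℝ) : Matrix (Fin l) (Fin l) ℂ :=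
  M.map (fun x => (x : ℂ))

/-- The `nℓ×nℓ` block tridiagonal matrix with diagonal blocks `V_1,…,V_n`,
off-diagonal blocks `-S_1,…,-S_{n-1}` above the diagonal and `-S_1ᵗ,…,-S_{n-1}ᵗ` below.
Block row/column `i : Fin n` corresponds to the `1`-based index `i+1`. -/
def blockJacobi (l n : ℕ) (V S : ℕ → Matrix (Fin l) (Fin l) ℝ) :
    Matrix (Fin n × Fin l) (Fin n × Fin l) ℂ := fun p q =>
  if (p.1 : ℕ) = q.1 then cMat (V (p.1 + 1)) p.2 q.2
  else if (q.1 : ℕ) = p.1 + 1 then -(cMat (S (p.1 + 1)) p.2 q.2)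
  else if (p.1 : ℕ) = q.1 + 1 then -((cMat (S (q.1 + 1)))ᵀ p.2 q.2)
  else 0

open Equiv

theorem finRotate_castSucc {m : ℕ} (j : Fin m) : finRotate (m + 1) j.castSucc = j.succ :=
  Fin.ext (coe_finRotate_of_ne_last (Fin.castSucc_lt_last j).ne)

theorem Finset.sum_range_ite_add_one_eq {M : Type*} [AddCommMonoid M] {g : ℕ → M} (hg : g 0 = 0)
    {a n : ℕ} (ha : a ≤ n) :
    ∑ j ∈ Finset.range n, (if j + 1 = a then g (j + 1) else 0) = g a := by
  have h := Finset.sum_range_succ' (fun k => if k = a then g k else 0) n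
  rw [Finset.sum_ite_eq', if_pos (Finset.mem_range.mpr (Nat.lt_succ_of_le ha))] at h
  simp only [hg, ite_self, add_zero] at h
  exact h.symm

namespace Matrix

variable {m ι : Type*} [Fintype m] [Fintype ι]

theorem comp_mul {α : Type*} [NonUnitalNonAssocSemiring α] (A B : Matrix m m (Matrix ι ι α)) :
    comp m m ι ι α (A * B) = comp m m ι ι α A * comp m m ι ι α B :=
  map_mul (compRingEquiv m ι α) A B

variable {R : Type*} [CommRing R] [DecidableEq ι]

theorem det_comp_of_isLowerTriangular [LinearOrder m] {M : Matrix m m (Matrix ι ι R)}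
    (h : M.IsLowerTriangular) : (comp m m ι ι R M).det = ∏ i, (M i i).det := by
  rw [h.comp.det_fintype]
  refine Fintype.prod_equiv OrderDual.ofDual _ _ fun i => ?_
  let e : ι ≃ {p : m × ι // OrderDual.toDual p.1 = i} :=
    { toFun := fun a => ⟨(OrderDual.ofDual i, a), rfl⟩
      invFun := fun p => p.1.2
      left_inv := fun _ => rfl
      right_inv := fun ⟨⟨_, _⟩, h⟩ => by cases h; rfl }
  rw [← det_submatrix_equiv_self e]
  rfl

theorem det_comp_submatrix_id [DecidableEq m] (σ : Perm m) (M : Matrix m m (Matrix ι ι R)) :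
    (comp m m ι ι R (M.submatrix id σ)).det =
      (Perm.sign σ : R) ^ Fintype.card ι * (comp m m ι ι R M).det := by
  have : comp m m ι ι R (M.submatrix id σ) =
      (comp m m ι ι R M).submatrix id (prodCongrLeft fun _ => σ) := rfl
  rw [this, det_permute', Perm.sign_prodCongrLeft]
  simp

theorem det_comp_one_updateCol_zero {n : ℕ} (p : Fin (n + 1) → Matrix ι ι R) :
    (comp _ _ ι ι R ((1 : Matrix (Fin (n + 1)) (Fin (n + 1)) (Matrix ι ι R)).updateCol 0 p)).det =
      (p 0).det := by
  have hlower :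
      ((1 : Matrix (Fin (n + 1)) (Fin (n + 1)) (Matrix ι ι R)).updateCol 0 p).IsLowerTriangular := by
    intro i j hij
    rw [OrderDual.toDual_lt_toDual] at hij
    simp [Fin.ne_zero_of_lt hij, one_apply_ne hij.ne]
  rw [det_comp_of_isLowerTriangular hlower, Fin.prod_univ_succ]
  simp [Fin.succ_ne_zero]

theorem det_comp_mul_det_eq_of_mulVec_eq_single {n : ℕ}
    {T : Matrix (Fin (n + 1)) (Fin (n + 1)) (Matrix ι ι R)}
    (hT : ∀ i j : Fin (n + 1), (i : ℕ) + 1 < j → T i j = 0)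
    {p : Fin (n + 1) → Matrix ι ι R} {q : Matrix ι ι R}
    (hp : T *ᵥ p = Pi.single (Fin.last n) q) :
    (-1) ^ (n * Fintype.card ι) * (comp _ _ ι ι R T).det * (p 0).det =
      (∏ i : Fin n, (T i.castSucc i.succ).det) * q.det := by
  set K := (T.updateCol 0 (Pi.single (Fin.last n) q)).submatrix id (finRotate (n + 1))
  have hK : K = (T * (1 : Matrix _ _ _).updateCol 0 p).submatrix id (finRotate (n + 1)) := by
    rw [mul_updateCol, Matrix.mul_one, hp]
  have hlower : K.IsLowerTriangular := by
    intro i j hij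
    rw [OrderDual.toDual_lt_toDual] at hij
    induction j using Fin.lastCases with
    | last => simp [K, hij.ne]
    | cast j =>
      simp only [K, submatrix_apply, id, finRotate_castSucc, updateCol_ne (Fin.succ_ne_zero j)]
      exact hT _ _ (by simpa [Fin.lt_def] using hij)
  have hdiag : ∏ i, (K i i).det = (∏ i : Fin n, (T i.castSucc i.succ).det) * q.det := by
    rw [Fin.prod_univ_castSucc]
    simp [K, Fin.succ_ne_zero]
  rw [← hdiag, ← det_comp_of_isLowerTriangular hlower, hK, det_comp_submatrix_id, sign_finRotate,
    comp_mul, det_mul, det_comp_one_updateCol_zero]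
  push_cast
  ring

end Matrix

section Jacobi

variable {R : Type*} [CommRing R] {ι : Type*} [Fintype ι] [DecidableEq ι]

def jacobiBlock (E : R) (V S : ℕ → Matrix ι ι R) (i j : ℕ) : Matrix ι ι R :=
  if i = j then V (i + 1) - E • 1
  else if j = i + 1 then -S (i + 1)
  else if i = j + 1 then -(S (j + 1))ᵀ
  else 0

def jacobiBlocks (n : ℕ) (E : R) (V S : ℕ → Matrix ι ι R) :
    Matrix (Fin n) (Fin n) (Matrix ι ι R) :=
  of fun i j => jacobiBlock E V S i j

theorem blockJacobi_sub_smul_one (l n : ℕ) (V S : ℕ → Matrix (Fin l) (Fin l) ℝ) (E : ℂ) :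
    blockJacobi l n V S - E • 1 =
      comp _ _ _ _ ℂ (jacobiBlocks n E (fun k => cMat (V k)) (fun k => cMat (S k))) := by
  ext ⟨i, a⟩ ⟨j, b⟩
  rw [Matrix.sub_apply, Matrix.smul_apply, one_apply]
  simp only [blockJacobi, jacobiBlocks, jacobiBlock, comp_apply, of_apply, Prod.mk.injEq,
    Fin.val_inj]
  by_cases hij : i = j
  · subst hij
    by_cases hab : a = b <;> simp [hab]
  · simp only [hij, false_and, if_false]
    split_ifs <;> simp

theorem jacobiBlock_mul (E : R) (V S P : ℕ → Matrix ι ι R) (a j : ℕ) :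
    jacobiBlock E V S a j * P (j + 1) =
      (if j = a then (V (a + 1) - E • 1) * P (a + 1) else 0) +
      (if j = a + 1 then -S (a + 1) * P (a + 2) else 0) +
      (if j + 1 = a then -(S (j + 1))ᵀ * P (j + 1) else 0) := by
  unfold jacobiBlock
  split_ifs <;> subst_vars <;> first | omega | simp

theorem jacobiBlocks_mulVec {m : ℕ} {E : R} {V S P : ℕ → Matrix ι ι R} (hP0 : P 0 = 0)
    (hP : ∀ k ∈ Finset.Icc 1 (m + 1),
      -(S (k - 1))ᵀ * P (k - 1) + V k * P k - S k * P (k + 1) = E • P k) :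
    jacobiBlocks (m + 1) E V S *ᵥ (fun i => P (i + 1)) =
      Pi.single (Fin.last m) (S (m + 1) * P (m + 2)) := by
  ext1 ⟨a, ha⟩
  have hrec : -(S a)ᵀ * P a + V (a + 1) * P (a + 1) - S (a + 1) * P (a + 2) = E • P (a + 1) :=
    hP (a + 1) (Finset.mem_Icc.mpr ⟨by omega, by omega⟩)
  calc (jacobiBlocks (m + 1) E V S *ᵥ fun i => P (i + 1)) ⟨a, ha⟩
      = ∑ j ∈ Finset.range (m + 1), jacobiBlock E V S a j * P (j + 1) :=
        Fin.sum_univ_eq_sum_range (fun j => jacobiBlock E V S a j * P (j + 1)) _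
    _ = (V (a + 1) - E • 1) * P (a + 1) + (if a + 1 < m + 1 then -S (a + 1) * P (a + 2) else 0)
          + -(S a)ᵀ * P a := by
        simp only [jacobiBlock_mul, Finset.sum_add_distrib, Finset.sum_ite_eq', Finset.mem_range,
          ha, if_true,
          Finset.sum_range_ite_add_one_eq (g := fun k => -(S k)ᵀ * P k) (by simp [hP0]) ha.le]
    _ = (Pi.single (Fin.last m) (S (m + 1) * P (m + 2)) : Fin (m + 1) → Matrix ι ι R) ⟨a, ha⟩ := by
        rcases Nat.lt_or_ge (a + 1) (m + 1) with h | h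
        · have hlast : (⟨a, ha⟩ : Fin (m + 1)) ≠ Fin.last m := Fin.ne_of_val_ne (by simp; omega)
          rw [if_pos h, Pi.single_eq_of_ne hlast, sub_mul, smul_mul_assoc, one_mul, ← hrec]
          simp only [neg_mul]
          abel
        · obtain rfl : a = m := by omega
          rw [if_neg (by omega), show (⟨a, ha⟩ : Fin (a + 1)) = Fin.last a from rfl,
            Pi.single_eq_same, sub_mul, smul_mul_assoc, one_mul, ← hrec]
          abel

theorem det_comp_jacobiBlocks {m : ℕ} {E : R} {V S P : ℕ → Matrix ι ι R} (hP0 : P 0 = 0)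
    (hP1 : P 1 = 1)
    (hP : ∀ k ∈ Finset.Icc 1 (m + 1),
      -(S (k - 1))ᵀ * P (k - 1) + V k * P k - S k * P (k + 1) = E • P k) :
    (comp _ _ ι ι R (jacobiBlocks (m + 1) E V S)).det =
      (∏ i : Fin m, (S (i + 1)).det) * (S (m + 1) * P (m + 2)).det := by
  have hHessenberg : ∀ i j : Fin (m + 1), (i : ℕ) + 1 < j → jacobiBlocks (m + 1) E V S i j = 0 := by
    intro i j h
    simp only [jacobiBlocks, of_apply, jacobiBlock]
    rw [if_neg (by omega), if_neg (by omega), if_neg (by omega)]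
  have hsuper : ∀ i : Fin m, jacobiBlocks (m + 1) E V S i.castSucc i.succ = -S (i + 1) := by
    intro i
    simp [jacobiBlocks, jacobiBlock]
  have h := det_comp_mul_det_eq_of_mulVec_eq_single hHessenberg (jacobiBlocks_mulVec hP0 hP)
  simp only [hsuper, det_neg, Finset.prod_mul_distrib, Finset.prod_const, Finset.card_univ,
    Fintype.card_fin, Fin.val_zero, zero_add, hP1, det_one, mul_one, ← pow_mul] at h
  rw [mul_comm (Fintype.card ι) m, mul_assoc] at h
  exact (isUnit_neg_one.pow _).mul_left_cancel h

end Jacobi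

theorem det_blockJacobi_eq_general (l n : ℕ)
    (V S : ℕ → Matrix (Fin l) (Fin l) ℝ)
    (hSn : S n = 1)
    (E : ℂ) (P : ℕ → Matrix (Fin l) (Fin l) ℂ)
    (hP0 : P 0 = 0) (hP1 : P 1 = 1)
    (hP : ∀ k ∈ Finset.Icc 1 n,
      -(cMat (S (k - 1)))ᵀ * P (k - 1) + cMat (V k) * P k - cMat (S k) * P (k + 1) =
        E • P k) :
    (blockJacobi l n V S - E • 1).det =
      (∏ j ∈ Finset.Icc 1 (n - 1), (cMat (S j)).det) * (P (n + 1)).det := by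
  rcases n with _ | m
  · simp [hP1]
  rw [blockJacobi_sub_smul_one,
    det_comp_jacobiBlocks (V := fun k => cMat (V k)) (S := fun k => cMat (S k)) hP0 hP1 hP,
    hSn, Nat.add_sub_cancel, Fin.prod_univ_eq_prod_range (fun i => (cMat (S (i + 1))).det),
    Finset.range_eq_Ico, Finset.prod_Ico_add' (fun j => (cMat (S j)).det) 0 m 1, zero_add,
    Finset.Ico_add_one_right_eq_Icc]
  simp [cMat]

/-- with `P^E` the matrix-valued solution of the difference equation with
`P^E(0) = 0`, `P^E(1) = I` (and `S_0 = S_n = I`), one has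
`det(M_n - E) = (∏_{j=1}^{n-1} det S_j) · det P^E(n+1)`. -/
theorem det_blockJacobi_eq (l n : ℕ) (hn : 1 ≤ n)
    (V S : ℕ → Matrix (Fin l) (Fin l) ℝ)
    (hV : ∀ k ∈ Finset.Icc 1 n, (V k).IsSymm)
    (hS : ∀ k ∈ Finset.Icc 1 (n - 1), IsUnit (S k).det)
    (hS0 : S 0 = 1) (hSn : S n = 1)
    (E : ℂ) (P : ℕ → Matrix (Fin l) (Fin l) ℂ)
    (hP0 : P 0 = 0) (hP1 : P 1 = 1)
    (hP : ∀ k ∈ Finset.Icc 1 n,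
      -(cMat (S (k - 1)))ᵀ * P (k - 1) + cMat (V k) * P k - cMat (S k) * P (k + 1) =
        E • P k) :
    (blockJacobi l n V S - E • 1).det =
      (∏ j ∈ Finset.Icc 1 (n - 1), (cMat (S j)).det) * (P (n + 1)).det :=
  det_blockJacobi_eq_general l n V S hSn E P hP0 hP1 hP
end

section
/- For ℓ ≥ 1, the set of vectors of the form (e_1, M e_1) ∧ ⋯ ∧ (e_ℓ, M e_ℓ) in the ℓ-th exterior power Λ^ℓ ℂ^{2ℓ}, as M ranges over all real ℓ×ℓ matrices, spans Λ^ℓ ℂ^{2ℓ}. Here (e_j, M e_j) denotes the vector in ℂ^{2ℓ} with first ℓ coordinates e_j and last ℓ coordinates M e_j. -/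
/-!
Let `e_j` and `f_a` be the two halves of the standard basis of `ℂ^ℓ ⊕ ℂ^ℓ`, and `W` the span of
the graph wedges. Since `⋀^ℓ` is spanned by wedges of basis vectors, it suffices to put
`e_{m 1} ∧ ⋯ ∧ e_{m ℓ}` in `W` for injective `m`. After a permutation of the factors, which only
changes the sign, the `j`-th factor is `e_j` for `j ∉ s` and some `f_{β j}` for `j ∈ s`. For
`r ⊆ s`, the graph of the `0/1` matrix whose `j`-th column is `f_{β j}` for `j ∈ r` and `0` otherwise
has wedge `∧_j (e_j + [j ∈ r] f_{β j}) = ∑_{r' ⊆ r} ∧_j (j ∈ r' ? f_{β j} : e_j)`, so strong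
induction on `s` puts the wedge with `r = s` in `W`.
-/

open Function

theorem MultilinearMap.map_piecewise_mem_of_forall_subset {R ι N : Type*} {M : ι → Type*}
    [Ring R] [∀ i, AddCommMonoid (M i)] [∀ i, Module R (M i)] [AddCommGroup N] [Module R N]
    [DecidableEq ι] (f : MultilinearMap R M N) (p : Submodule R N) (t u : ∀ i, M i)
    (s : Finset ι) (h : ∀ r ⊆ s, f (r.piecewise (t + u) u) ∈ p) :
    f (s.piecewise t u) ∈ p := by
  induction s using Finset.strongInduction with
  | H s ih =>
    have hexp := f.map_piecewise_add t u s
    rw [← Finset.add_sum_erase _ _ (Finset.mem_powerset_self s)] at hexp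
    rw [eq_sub_of_add_eq hexp.symm]
    refine p.sub_mem (h s subset_rfl) (p.sum_mem fun r hr => ?_)
    obtain ⟨hne, hsub⟩ := Finset.mem_erase.mp hr
    have hrs : r ⊂ s := Finset.ssubset_iff_subset_ne.mpr ⟨Finset.mem_powerset.mp hsub, hne⟩
    exact ih r hrs fun r' hr' => h r' (hr'.trans hrs.subset)

theorem AlternatingMap.map_comp_perm_mem_iff {R M N ι : Type*} [Ring R] [AddCommMonoid M]
    [Module R M] [AddCommGroup N] [Module R N] [Fintype ι] [DecidableEq ι]
    (f : M [⋀^ι]→ₗ[R] N) (p : Submodule R N) (v : ι → M) (σ : Equiv.Perm ι) :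
    f (v ∘ σ) ∈ p ↔ f v ∈ p := by
  rw [f.map_perm, Submodule.smul_mem_iff']

theorem Equiv.Perm.exists_forall_eq_inl_or_isRight {ι κ : Type*} [Finite ι] {m : ι → ι ⊕ κ}
    (hm : Injective m) : ∃ σ : Equiv.Perm ι, ∀ j, m (σ j) = .inl j ∨ (m (σ j)).isRight := by
  let left : {i // (m i).isLeft} → ι := fun i => (m i).getLeft i.2
  have hleft : Injective left := fun i i' h => Subtype.ext <| hm <| by
    rw [← Sum.inl_getLeft (m i) i.2, ← Sum.inl_getLeft (m i') i'.2]
    exact congrArg Sum.inl h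
  obtain ⟨τ, hτ⟩ := Equiv.Perm.exists_extending_pair _ left Subtype.val_injective hleft
  refine ⟨τ.symm, fun j => ?_⟩
  cases h : m (τ.symm j) with
  | inl a =>
    have := hτ ⟨τ.symm j, by rw [h]; rfl⟩
    simp only [Equiv.apply_symm_apply, left, h, Sum.getLeft_inl] at this
    simp [this]
  | inr c => simp

def graphColumn {l : ℕ} (M : Matrix (Fin l) (Fin l) ℝ) (j : Fin l) : Fin l ⊕ Fin l → ℂ :=
  Sum.elim (Pi.single j 1) (fun a => ((M a j : ℝ) : ℂ))

theorem ιMulti_single_mem_of_forall_eq_inl_or_isRight {l : ℕ}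
    {p : Submodule ℂ (ExteriorAlgebra ℂ (Fin l ⊕ Fin l → ℂ))}
    (hp : ∀ M, ExteriorAlgebra.ιMulti ℂ l (graphColumn M) ∈ p)
    (b : Fin l → Fin l ⊕ Fin l) (hb : ∀ j, b j = .inl j ∨ (b j).isRight) :
    ExteriorAlgebra.ιMulti ℂ l (fun j => (Pi.single (b j) 1 : Fin l ⊕ Fin l → ℂ)) ∈ p := by
  set s := Finset.univ.filter fun j => b j ≠ .inl j
  have hpw : (fun j => (Pi.single (b j) 1 : Fin l ⊕ Fin l → ℂ)) =
      s.piecewise (fun j => Pi.single (b j) 1) (fun j => Pi.single (.inl j) 1) := by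
    funext j
    by_cases hj : j ∈ s
    · simp [hj]
    · simp_all [s]
  rw [hpw]
  refine MultilinearMap.map_piecewise_mem_of_forall_subset
    (ExteriorAlgebra.ιMulti ℂ l).toMultilinearMap p _ _ s fun r hr => ?_
  change ExteriorAlgebra.ιMulti ℂ l _ ∈ p
  convert hp fun a j => if j ∈ r then (Pi.single (b j) 1 : Fin l ⊕ Fin l → ℝ) (.inr a) else 0
    using 2
  funext j x
  by_cases hj : j ∈ r
  · have hright : (b j).isRight := (hb j).resolve_left (Finset.mem_filter.mp (hr hj)).2
    cases x with
    | inl a =>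
      obtain ⟨c, hc⟩ := Sum.isRight_iff.mp hright
      simp [graphColumn, hj, hc, Pi.single_apply]
    | inr a => simp [graphColumn, hj, Pi.single_apply, apply_ite ((↑·) : ℝ → ℂ)]
  · cases x <;> simp [graphColumn, hj, Pi.single_apply]

theorem ιMulti_basisFun_comp_mem {l : ℕ}
    {p : Submodule ℂ (ExteriorAlgebra ℂ (Fin l ⊕ Fin l → ℂ))}
    (hp : ∀ M, ExteriorAlgebra.ιMulti ℂ l (graphColumn M) ∈ p) (m : Fin l → Fin l ⊕ Fin l) :
    ExteriorAlgebra.ιMulti ℂ l (Pi.basisFun ℂ (Fin l ⊕ Fin l) ∘ m) ∈ p := by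
  by_cases hm : Injective m
  · obtain ⟨σ, hσ⟩ := Equiv.Perm.exists_forall_eq_inl_or_isRight hm
    rw [← AlternatingMap.map_comp_perm_mem_iff _ _ _ σ, comp_assoc]
    simpa only [comp_def, Pi.basisFun_apply] using
      ιMulti_single_mem_of_forall_eq_inl_or_isRight hp (m ∘ σ) hσ
  · rw [AlternatingMap.map_eq_zero_of_not_injective _ _ fun h => hm h.of_comp]
    exact p.zero_mem

theorem exterior_power_span_general (l : ℕ) :
    Submodule.span ℂ
        {w : ExteriorAlgebra ℂ (Fin l ⊕ Fin l → ℂ) |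
          ∃ M : Matrix (Fin l) (Fin l) ℝ,
            w = ExteriorAlgebra.ιMulti ℂ l
              (fun j : Fin l =>
                Sum.elim (Pi.single j (1 : ℂ)) (fun a : Fin l => ((M a j : ℝ) : ℂ)))} =
      ⋀[ℂ]^l (Fin l ⊕ Fin l → ℂ) := by
  apply le_antisymm
  · rw [Submodule.span_le]
    rintro _ ⟨M, rfl⟩
    exact ExteriorAlgebra.ιMulti_range ℂ l (Set.mem_range_self _)
  · rw [← exteriorPower.ιMulti_span_fixedDegree_of_span_eq_top ℂ l _ (Pi.basisFun ℂ _).span_eq,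
      Submodule.span_le]
    rintro _ ⟨a, ha, rfl⟩
    obtain ⟨m, rfl⟩ := Set.range_subset_range_iff_exists_comp.mp ha
    refine ιMulti_basisFun_comp_mem (fun M => ?_) m
    exact Submodule.subset_span ⟨M, rfl⟩

/-- for `ℓ ≥ 1`, the vectors `(e_1, M e_1) ∧ ⋯ ∧ (e_ℓ, M e_ℓ)` in
`Λ^ℓ ℂ^{2ℓ}`, as `M` ranges over the real `ℓ×ℓ` matrices, span `Λ^ℓ ℂ^{2ℓ}`.
Here `ℂ^{2ℓ}` is realized as `Fin ℓ ⊕ Fin ℓ → ℂ` and `(e_j, M e_j)` has first `ℓ`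
coordinates `e_j` and last `ℓ` coordinates the `j`-th column of `M`. -/
theorem exterior_power_span (l : ℕ) (hl : 1 ≤ l) :
    Submodule.span ℂ
        {w : ExteriorAlgebra ℂ (Fin l ⊕ Fin l → ℂ) |
          ∃ M : Matrix (Fin l) (Fin l) ℝ,
            w = ExteriorAlgebra.ιMulti ℂ l
              (fun j : Fin l =>
                Sum.elim (Pi.single j (1 : ℂ)) (fun a : Fin l => ((M a j : ℝ) : ℂ)))} =
      ⋀[ℂ]^l (Fin l ⊕ Fin l → ℂ) :=
  exterior_power_span_general l
end

section
/- In sp₂(ℝ), let A₁ = E_{32} + E_{41}, A₂ = E_{14} + E_{23}, A₃ = E_{12} + E_{21} - E_{34} - E_{43}, and A₄ = E_{12} - E_{43} (where E_{ij} is the 4×4 matrix unit). Then A₁, A₂, A₃, A₄ together with the six commutators [A_i, A_j] for 1 ≤ i < j ≤ 4 form a set of 10 linearly independent elements of sp₂(ℝ); since dim sp₂(ℝ) = 10, these matrices span sp₂(ℝ). -/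
open Matrix

/-- The standard symplectic form `J = [[0, I₂], [-I₂, 0]]` on `ℝ⁴`. -/
def J4 : Matrix (Fin 4) (Fin 4) ℝ :=
  !![0, 0, 1, 0; 0, 0, 0, 1; -1, 0, 0, 0; 0, -1, 0, 0]

/-- The symplectic Lie algebra `sp₂(ℝ) = {X : Xᵗ J + J X = 0}` as a submodule of the
`4×4` real matrices. -/
def sp2 : Submodule ℝ (Matrix (Fin 4) (Fin 4) ℝ) where
  carrier := {X | Xᵀ * J4 + J4 * X = 0}
  add_mem' := by
    intro a b ha hb
    simp only [Set.mem_setOf_eq] at *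
    rw [transpose_add, Matrix.add_mul, Matrix.mul_add, add_add_add_comm, ha, hb, add_zero]
  zero_mem' := by simp
  smul_mem' := by
    intro c x hx
    simp only [Set.mem_setOf_eq] at *
    rw [transpose_smul, Matrix.smul_mul, Matrix.mul_smul, ← smul_add, hx, smul_zero]

/-- `A₁ = E₃₂ + E₄₁` (1-based matrix units). -/
def A₁ : Matrix (Fin 4) (Fin 4) ℝ := Matrix.single 2 1 1 + Matrix.single 3 0 1
/-- `A₂ = E₁₄ + E₂₃`. -/
def A₂ : Matrix (Fin 4) (Fin 4) ℝ := Matrix.single 0 3 1 + Matrix.single 1 2 1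
/-- `A₃ = E₁₂ + E₂₁ - E₃₄ - E₄₃`. -/
def A₃ : Matrix (Fin 4) (Fin 4) ℝ :=
  Matrix.single 0 1 1 + Matrix.single 1 0 1 - Matrix.single 2 3 1 - Matrix.single 3 2 1
/-- `A₄ = E₁₂ - E₄₃`. -/
def A₄ : Matrix (Fin 4) (Fin 4) ℝ := Matrix.single 0 1 1 - Matrix.single 3 2 1

/-- The commutator `[A,B] = AB - BA`. -/
def matComm (X Y : Matrix (Fin 4) (Fin 4) ℝ) : Matrix (Fin 4) (Fin 4) ℝ := X * Y - Y * X

/-- The family consisting of `A₁,…,A₄` and the six commutators `[A_i, A_j]`, `i < j`. -/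
def spFamily : Fin 10 → Matrix (Fin 4) (Fin 4) ℝ :=
  ![A₁, A₂, A₃, A₄, matComm A₁ A₂, matComm A₁ A₃, matComm A₁ A₄,
    matComm A₂ A₃, matComm A₂ A₄, matComm A₃ A₄]

/-!
Write `X = [[a, b], [c, d]]` in `2 × 2` blocks: `X ∈ sp₂(ℝ)` says exactly that `b` and `c` are
symmetric and `d = -aᵀ`, which leaves ten free entries. The linear coordinates `spFamilyCoord`
are dual to the ten given matrices, and they vanish on no nonzero element of `sp₂(ℝ)`; duality
gives linear independence, and spanning follows by applying the coordinates to
`X - ∑ i, spFamilyCoord X i • spFamily i`. The commutators lie in `sp₂(ℝ)` because it is the Lie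
algebra of matrices skew-adjoint for `J`.
-/

theorem Submodule.span_range_eq_of_disjoint_ker {R M ι : Type*} [Ring R] [AddCommGroup M]
    [Module R M] [Fintype ι] [DecidableEq ι] {S : Submodule R M} {v : ι → M}
    (c : M →ₗ[R] ι → R) (hvS : ∀ i, v i ∈ S) (hcv : ∀ i, c (v i) = Pi.single i 1)
    (hS : Disjoint S (LinearMap.ker c)) : span R (Set.range v) = S := by
  refine le_antisymm (span_le.2 (Set.range_subset_iff.2 hvS)) fun x hx => ?_
  have hc : c (∑ i, c x i • v i) = c x := by
    simpa only [map_sum, map_smul, hcv] using (pi_eq_sum_univ' (c x)).symm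
  have hx_eq : x - ∑ i, c x i • v i = 0 :=
    disjoint_def.1 hS _ (sub_mem hx (sum_mem fun i _ => smul_mem _ _ (hvS i)))
      (by rw [LinearMap.mem_ker, map_sub, hc, sub_self])
  rw [sub_eq_zero.1 hx_eq]
  exact sum_mem fun i _ => smul_mem _ _ (subset_span (Set.mem_range_self i))

theorem sp2_eq_skewAdjointMatricesSubmodule : sp2 = skewAdjointMatricesSubmodule J4 := by
  ext X
  rw [mem_skewAdjointMatricesSubmodule, Matrix.IsSkewAdjoint, Matrix.IsAdjointPair, mul_neg,
    ← add_eq_zero_iff_eq_neg]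
  rfl

theorem matComm_mem_sp2 {X Y : Matrix (Fin 4) (Fin 4) ℝ} (hX : X ∈ sp2) (hY : Y ∈ sp2) :
    matComm X Y ∈ sp2 := by
  rw [sp2_eq_skewAdjointMatricesSubmodule] at *
  exact isSkewAdjoint_bracket J4 hX hY

theorem mem_sp2_iff {X : Matrix (Fin 4) (Fin 4) ℝ} :
    X ∈ sp2 ↔ X 3 0 = X 2 1 ∧ X 1 2 = X 0 3 ∧
      X 2 2 = -X 0 0 ∧ X 2 3 = -X 1 0 ∧ X 3 2 = -X 0 1 ∧ X 3 3 = -X 1 1 := by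
  change Xᵀ * J4 + J4 * X = 0 ↔ _
  rw [← Matrix.ext_iff]
  simp only [J4, cons_mul, empty_mul, Equiv.symm_apply_apply, Matrix.add_apply,
    Matrix.mul_apply, transpose_apply, of_apply, cons_val', cons_val_fin_one, Fin.sum_univ_four,
    cons_val_zero, cons_val_one, cons_val, vecMul, dotProduct, zero_mul, add_zero, one_mul,
    zero_add, neg_mul, Matrix.zero_apply, Fin.forall_fin_succ, mul_zero, mul_neg, mul_one,
    cons_val_succ, Fin.succ_zero_eq_one, Fin.succ_one_eq_two, IsEmpty.forall_iff, and_true,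
    neg_add_cancel, true_and, add_neg_cancel]
  grind

theorem spFamily_mem_sp2 (i : Fin 10) : spFamily i ∈ sp2 := by
  have h₁ : A₁ ∈ sp2 := mem_sp2_iff.2 (by simp [A₁])
  have h₂ : A₂ ∈ sp2 := mem_sp2_iff.2 (by simp [A₂])
  have h₃ : A₃ ∈ sp2 := mem_sp2_iff.2 (by simp [A₃])
  have h₄ : A₄ ∈ sp2 := mem_sp2_iff.2 (by simp [A₄])
  fin_cases i
  exacts [h₁, h₂, h₃, h₄, matComm_mem_sp2 h₁ h₂, matComm_mem_sp2 h₁ h₃, matComm_mem_sp2 h₁ h₄,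
    matComm_mem_sp2 h₂ h₃, matComm_mem_sp2 h₂ h₄, matComm_mem_sp2 h₃ h₄]

theorem matComm_A₁_A₂ :
    matComm A₁ A₂ = single 2 2 1 + single 3 3 1 - single 0 0 1 - single 1 1 1 := by
  simp only [matComm, A₁, A₂, add_mul, mul_add, single_mul_single_same,
    single_mul_single_of_ne, ne_eq, Fin.reduceEq, not_false_eq_true, mul_one]
  abel

theorem matComm_A₁_A₃ : matComm A₁ A₃ = (2 : ℝ) • (single 2 0 1 + single 3 1 1) := by
  simp only [matComm, A₁, A₃, add_mul, mul_add, sub_mul, mul_sub, single_mul_single_same,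
    single_mul_single_of_ne, ne_eq, Fin.reduceEq, not_false_eq_true, mul_one]
  module

theorem matComm_A₁_A₄ : matComm A₁ A₄ = (2 : ℝ) • single 3 1 1 := by
  simp only [matComm, A₁, A₄, add_mul, mul_add, sub_mul, mul_sub, single_mul_single_same,
    single_mul_single_of_ne, ne_eq, Fin.reduceEq, not_false_eq_true, mul_one]
  module

theorem matComm_A₂_A₃ : matComm A₂ A₃ = (-2 : ℝ) • (single 0 2 1 + single 1 3 1) := by
  simp only [matComm, A₂, A₃, add_mul, mul_add, sub_mul, mul_sub, single_mul_single_same,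
    single_mul_single_of_ne, ne_eq, Fin.reduceEq, not_false_eq_true, mul_one]
  module

theorem matComm_A₂_A₄ : matComm A₂ A₄ = (-2 : ℝ) • single 0 2 1 := by
  simp only [matComm, A₂, A₄, add_mul, mul_add, sub_mul, mul_sub, single_mul_single_same,
    single_mul_single_of_ne, ne_eq, Fin.reduceEq, not_false_eq_true, mul_one]
  module

theorem matComm_A₃_A₄ :
    matComm A₃ A₄ = single 1 1 1 + single 2 2 1 - single 0 0 1 - single 3 3 1 := by
  simp only [matComm, A₃, A₄, add_mul, mul_add, sub_mul, mul_sub, single_mul_single_same,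
    single_mul_single_of_ne, ne_eq, Fin.reduceEq, not_false_eq_true, mul_one]
  abel

noncomputable def spFamilyCoord : Matrix (Fin 4) (Fin 4) ℝ →ₗ[ℝ] (Fin 10 → ℝ) where
  toFun X := ![X 2 1, X 0 3, X 1 0, X 0 1 - X 1 0, -(X 0 0 + X 1 1) / 2, X 2 0 / 2,
    (X 3 1 - X 2 0) / 2, -X 1 3 / 2, (X 1 3 - X 0 2) / 2, (X 1 1 - X 0 0) / 2]
  map_add' X Y := by
    simp only [Matrix.add_apply, cons_add_cons, empty_add_empty]
    ring_nf
  map_smul' c X := by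
    simp only [Matrix.smul_apply, smul_eq_mul, RingHom.id_apply, smul_cons, smul_empty]
    ring_nf

@[simp]
theorem spFamilyCoord_apply (X : Matrix (Fin 4) (Fin 4) ℝ) :
    spFamilyCoord X = ![X 2 1, X 0 3, X 1 0, X 0 1 - X 1 0, -(X 0 0 + X 1 1) / 2, X 2 0 / 2,
      (X 3 1 - X 2 0) / 2, -X 1 3 / 2, (X 1 3 - X 0 2) / 2, (X 1 1 - X 0 0) / 2] :=
  rfl

theorem spFamilyCoord_spFamily (i : Fin 10) : spFamilyCoord (spFamily i) = Pi.single i 1 := by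
  fin_cases i <;>
    simp only [spFamily, Fin.reduceFinMk, cons_val, Fin.isValue, matComm_A₁_A₂, matComm_A₁_A₃,
      matComm_A₁_A₄, matComm_A₂_A₃, matComm_A₂_A₄, matComm_A₃_A₄] <;>
    simp [A₁, A₂, A₃, A₄, funext_iff, Fin.forall_fin_succ]

theorem disjoint_sp2_ker_spFamilyCoord : Disjoint sp2 (LinearMap.ker spFamilyCoord) := by
  refine Submodule.disjoint_def.2 fun X hX hX0 => ?_
  obtain ⟨h30, h12, h22, h23, h32, h33⟩ := mem_sp2_iff.1 hX
  simp only [LinearMap.mem_ker, spFamilyCoord_apply, funext_iff, Pi.zero_apply,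
    Fin.forall_fin_succ, cons_val_zero, cons_val_succ, div_eq_zero_iff, OfNat.ofNat_ne_zero,
    or_false, neg_eq_zero, cons_val_fin_one, forall_const] at hX0
  ext i j
  fin_cases i <;> fin_cases j <;>
    simp only [Fin.reduceFinMk, Fin.zero_eta, Fin.mk_one, Fin.isValue, Matrix.zero_apply] <;>
    linarith

/-- the four matrices `A₁,…,A₄` together with their six commutators are
ten linearly independent elements of `sp₂(ℝ)`, and hence span `sp₂(ℝ)` (which has
dimension 10). -/
theorem spFamily_spans_sp2 :
    (∀ i, spFamily i ∈ sp2) ∧ LinearIndependent ℝ spFamily ∧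
      Submodule.span ℝ (Set.range spFamily) = sp2 := by
  refine ⟨spFamily_mem_sp2, LinearIndependent.of_comp spFamilyCoord ?_,
    Submodule.span_range_eq_of_disjoint_ker spFamilyCoord spFamily_mem_sp2 spFamilyCoord_spFamily
      disjoint_sp2_ker_spFamilyCoord⟩
  simpa only [Function.comp_def, spFamilyCoord_spFamily] using
    Pi.linearIndependent_single_one (Fin 10) ℝ
end
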